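/- arXiv:1305.0636 — 2 statements merged into one kernel-verified Lean document; each statement's English description precedes it below -/
import Mathlib

section
/- Fix an efficient lcw expression for a finite graph G and a label ℓ used in this expression. Then there is an lcw expression for G using the same set of labels in which the vertices are inserted in the same order and in which vertices labeled ℓ are never relabeled. -/
/-! ## Common definitions

Linear clique-width (lcw) expressions and derived notions, following
Brignall–Lozin–Stacho, "Bichain graphs: geometric model and universal graphs" /
"Linear clique-width of subclasses of cographs".

An lcw expression over a label alphabet `L` is a list of operations:
insert a new vertex with a given label, add all edges between two distinct
label classes, or relabel one label class to another.  Vertices are indexed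
by the natural numbers `0, 1, 2, …` in order of insertion. -/

/-- The three kinds of operations of an lcw expression. -/
inductive LcwOp (L : Type) where
  | insert : L → LcwOp L
  | join : L → L → LcwOp L
  | relabel : L → L → LcwOp L

/-- The state while executing an lcw expression: the number `n` of vertices
inserted so far (the vertices are `0, …, n-1`), the adjacency relation built
so far, and the current labeling (`none` for indices not yet inserted). -/
structure LcwState (L : Type) where
  n : ℕ
  adj : ℕ → ℕ → Prop
  lab : ℕ → Option L

/-- The initial, empty state. -/
def LcwState.init (L : Type) : LcwState L :=
  ⟨0, fun _ _ => False, fun _ => none⟩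

/-- Executing one operation. -/
def LcwState.step {L : Type} [DecidableEq L] (s : LcwState L) : LcwOp L → LcwState L
  | .insert a => ⟨s.n + 1, s.adj, fun v => if v = s.n then some a else s.lab v⟩
  | .join i j =>
      ⟨s.n,
       fun u v => s.adj u v ∨
         (u ≠ v ∧ ((s.lab u = some i ∧ s.lab v = some j) ∨
                   (s.lab u = some j ∧ s.lab v = some i))),
       s.lab⟩
  | .relabel i j => ⟨s.n, s.adj, fun v => if s.lab v = some i then some j else s.lab v⟩

/-- Executing an lcw expression (a list of operations) from the empty state. -/
def runLcw {L : Type} [DecidableEq L] (e : List (LcwOp L)) : LcwState L :=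
  e.foldl LcwState.step (LcwState.init L)

/-- Well-formedness: every edge-adding operation uses two distinct labels. -/
def WfExpr {L : Type} (e : List (LcwOp L)) : Prop :=
  ∀ op ∈ e, ∀ i j : L, op = LcwOp.join i j → i ≠ j

/-- The expression `e` builds the graph `G`, where the bijection
`f` sends each vertex of `G` to its insertion index (so `f` records the
insertion order of the vertices). -/
def BuildsVia {L V : Type} [DecidableEq L] [Fintype V] (e : List (LcwOp L))
    (G : SimpleGraph V) (f : V → ℕ) : Prop :=
  WfExpr e ∧ Function.Injective f ∧ (runLcw e).n = Fintype.card V ∧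
    (∀ v, f v < (runLcw e).n) ∧ ∀ u v, G.Adj u v ↔ (runLcw e).adj (f u) (f v)

/-- The expression `e` builds the graph `G`. -/
def Builds {L V : Type} [DecidableEq L] [Fintype V] (e : List (LcwOp L))
    (G : SimpleGraph V) : Prop :=
  ∃ f : V → ℕ, BuildsVia e G f

/-- The linear clique-width of a finite graph: the least size of a label
alphabet over which some lcw expression builds `G`.  (An expression over
`Fin k` is an expression using `k` labels; an *efficient* expression for `G`
is one over `Fin (lcw G)`.) -/
noncomputable def lcw {V : Type} [Fintype V] (G : SimpleGraph V) : ℕ :=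
  sInf {k : ℕ | ∃ e : List (LcwOp (Fin k)), Builds e G}

/-- `ℓ` is a sink label of the expression `e`: it is never used in an
edge-adding operation and vertices labeled `ℓ` are never relabeled. -/
def SinkLabel {L : Type} (e : List (LcwOp L)) (ℓ : L) : Prop :=
  (∀ op ∈ e, ∀ i j : L, op = LcwOp.join i j → i ≠ ℓ ∧ j ≠ ℓ) ∧
  (∀ op ∈ e, ∀ j : L, op = LcwOp.relabel ℓ j → j = ℓ)

/-- An expression is sink-free if no label is a sink label. -/
def SinkFree {L : Type} (e : List (LcwOp L)) : Prop :=
  ∀ ℓ : L, ¬ SinkLabel e ℓ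

/-- The disjoint union of two graphs. -/
def GraphDisjUnion {V W : Type} (G : SimpleGraph V) (H : SimpleGraph W) :
    SimpleGraph (V ⊕ W) where
  Adj x y :=
    match x, y with
    | Sum.inl a, Sum.inl b => G.Adj a b
    | Sum.inr a, Sum.inr b => H.Adj a b
    | _, _ => False
  symm := by
    constructor
    rintro (a | a) (b | b) h
    · exact G.adj_symm h
    · exact h.elim
    · exact h.elim
    · exact H.adj_symm h
  loopless := by
    constructor
    rintro (a | a) h
    · exact G.irrefl h
    · exact H.irrefl h

/-- The join of two graphs: their disjoint union together with all edges
between the two sides. -/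
def GraphJoin {V W : Type} (G : SimpleGraph V) (H : SimpleGraph W) :
    SimpleGraph (V ⊕ W) :=
  (GraphDisjUnion Gᶜ Hᶜ)ᶜ

/-- `H` is (isomorphic to) an induced subgraph of `G`. -/
def InducedSubgraphOf {W V : Type} (H : SimpleGraph W) (G : SimpleGraph V) : Prop :=
  ∃ f : W ↪ V, ∀ a b : W, H.Adj a b ↔ G.Adj (f a) (f b)

/-- The path `P₄` on four vertices (edges 01, 12, 23). -/
def pathP4 : SimpleGraph (Fin 4) :=
  SimpleGraph.fromRel (fun a b => (b : ℕ) = (a : ℕ) + 1)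

/-- The cycle `C₄` on four vertices (edges 01, 12, 23, 30). -/
def cycleC4 : SimpleGraph (Fin 4) :=
  SimpleGraph.fromRel (fun a b => (b : ℕ) = (a : ℕ) + 1 ∨ ((a : ℕ) = 3 ∧ (b : ℕ) = 0))

/-- The graph `2K₂` (edges 01 and 23). -/
def twoK2 : SimpleGraph (Fin 4) :=
  SimpleGraph.fromRel (fun a b => ((a : ℕ) = 0 ∧ (b : ℕ) = 1) ∨ ((a : ℕ) = 2 ∧ (b : ℕ) = 3))

/-- Cographs: the graphs with no induced `P₄`. -/
def IsCograph {V : Type} (G : SimpleGraph V) : Prop :=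
  ¬ InducedSubgraphOf pathP4 G

/-- Quasi-threshold (trivially perfect) graphs: no induced `P₄` and no induced `C₄`. -/
def IsQuasiThreshold {V : Type} (G : SimpleGraph V) : Prop :=
  ¬ InducedSubgraphOf pathP4 G ∧ ¬ InducedSubgraphOf cycleC4 G

/-- Threshold graphs: no induced `P₄`, `C₄` or `2K₂`. -/
def IsThreshold {V : Type} (G : SimpleGraph V) : Prop :=
  ¬ InducedSubgraphOf pathP4 G ∧ ¬ InducedSubgraphOf cycleC4 G ∧ ¬ InducedSubgraphOf twoK2 G

/-- A finite graph, encoded with vertex set `Fin n`.  A *class* of graphs,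
i.e. a set of finite graphs closed under isomorphism, is modelled as a
hereditary set of `FinGraph`s (hereditary sets are automatically closed
under isomorphism). -/
def FinGraph : Type := Σ n : ℕ, SimpleGraph (Fin n)

/-- The complement of a finite graph. -/
def FinGraph.compl (G : FinGraph) : FinGraph := ⟨G.1, G.2ᶜ⟩

/-- The induced-subgraph order on finite graphs. -/
def IndF (H G : FinGraph) : Prop := InducedSubgraphOf H.2 G.2

/-- A set of finite graphs is hereditary if it is closed downward under the
induced subgraph order (in particular it is closed under isomorphism). -/
def Hereditary (C : Set FinGraph) : Prop :=
  ∀ G ∈ C, ∀ H : FinGraph, IndF H G → H ∈ C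

/-- The finite graph `K` is isomorphic to the graph `G`. -/
def IsoTo {V : Type} (K : FinGraph) (G : SimpleGraph V) : Prop :=
  ∃ e : Fin K.1 ≃ V, ∀ a b, K.2.Adj a b ↔ G.Adj (e a) (e b)

/-- The class `C` contains (a copy of) the graph `G`. -/
def MemUpToIso (C : Set FinGraph) {V : Type} (G : SimpleGraph V) : Prop :=
  ∃ K ∈ C, IsoTo K G

/-- `C` is closed under disjoint unions. -/
def ClosedUnderDisjointUnions (C : Set FinGraph) : Prop :=
  ∀ G ∈ C, ∀ H ∈ C, MemUpToIso C (GraphDisjUnion (Sigma.snd G) (Sigma.snd H))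

/-- `C` is closed under joins. -/
def ClosedUnderJoins (C : Set FinGraph) : Prop :=
  ∀ G ∈ C, ∀ H ∈ C, MemUpToIso C (GraphJoin (Sigma.snd G) (Sigma.snd H))

/-- `C` is atomic: it cannot be written as the union of two proper
hereditary subclasses. -/
def AtomicClass (C : Set FinGraph) : Prop :=
  ¬ ∃ D₁ D₂ : Set FinGraph, Hereditary D₁ ∧ Hereditary D₂ ∧
      D₁ ⊂ C ∧ D₂ ⊂ C ∧ C = D₁ ∪ D₂

/-- The inflation `G[H₁, …, Hₙ]` of a graph `G` on `Fin n` by graphs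
`H i` (`i : Fin n`): substitute `H i` for the vertex `i` of `G`. -/
def inflate {n : ℕ} (G : SimpleGraph (Fin n)) (m : Fin n → ℕ)
    (H : ∀ i : Fin n, SimpleGraph (Fin (m i))) :
    SimpleGraph (Σ i : Fin n, Fin (m i)) where
  Adj x y := (x.1 ≠ y.1 ∧ G.Adj x.1 y.1) ∨ ∃ h : x.1 = y.1, (H y.1).Adj (h ▸ x.2) y.2
  symm := by
    constructor
    rintro ⟨i, a⟩ ⟨j, b⟩ (⟨hne, hadj⟩ | ⟨h, hadj⟩)
    · exact Or.inl ⟨hne.symm, G.adj_symm hadj⟩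
    · cases h
      exact Or.inr ⟨rfl, (H i).adj_symm hadj⟩
  loopless := by
    constructor
    rintro ⟨i, a⟩ (⟨hne, _⟩ | ⟨h, hadj⟩)
    · exact hne rfl
    · exact (H i).irrefl hadj

/-- The inflation `C[D]` of the class `C` by the class `D`: all graphs
isomorphic to an inflation of a graph of `C` by graphs of `D`. -/
def classInflate (C D : Set FinGraph) : Set FinGraph :=
  {K | ∃ (n : ℕ) (G : SimpleGraph (Fin n)) (m : Fin n → ℕ)
        (H : ∀ i : Fin n, SimpleGraph (Fin (m i))),
      (⟨n, G⟩ : FinGraph) ∈ C ∧ (∀ i, (⟨m i, H i⟩ : FinGraph) ∈ D) ∧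
      IsoTo K (inflate G m H)}

/-- The class of threshold graphs (as finite graphs). -/
def thresholdClass : Set FinGraph := {G : FinGraph | IsThreshold G.2}

/-- Vertex types of the sequence witnessing unbounded linear clique-width:
`qtV 0` carries `G₁ = K₂` and `qtV (k+1)` carries
`G_{k+2} = K₁ ∗ ((G_{k+1} ∪ G_{k+1}) ∪ (G_{k+1} ∪ G_{k+1}))`. -/
def qtV : ℕ → Type
  | 0 => Fin 2
  | k + 1 => Unit ⊕ ((qtV k ⊕ qtV k) ⊕ (qtV k ⊕ qtV k))

instance qtVFintype : ∀ k : ℕ, Fintype (qtV k)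
  | 0 => inferInstanceAs (Fintype (Fin 2))
  | k + 1 =>
      letI := qtVFintype k
      inferInstanceAs (Fintype (Unit ⊕ ((qtV k ⊕ qtV k) ⊕ (qtV k ⊕ qtV k))))

/-- The graphs `G₁, G₂, …` of the paper, reindexed so that `qtG k = G_{k+1}`:
`qtG 0 = K₂` and `qtG (k+1) = K₁ ∗ ((qtG k ∪ qtG k) ∪ (qtG k ∪ qtG k))`. -/
def qtG : ∀ k : ℕ, SimpleGraph (qtV k)
  | 0 => (⊤ : SimpleGraph (Fin 2))
  | k + 1 =>
      GraphJoin (⊥ : SimpleGraph Unit)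
        (GraphDisjUnion (GraphDisjUnion (qtG k) (qtG k)) (GraphDisjUnion (qtG k) (qtG k)))

/-! Run the expression while renaming labels by a permutation `π` that changes as we go.
Whenever a relabel `i → j` would move the class currently called `ℓ`, merge the class of `j`
into `ℓ` instead and from then on swap the names `ℓ` and `π j`.  At every stage the new state
is the old one with its labels renamed by `π`, so the vertex count and the edges agree. -/

theorem Option.map_perm_eq_some_perm {L : Type} (π : Equiv.Perm L) (o : Option L) (i : L) :
    o.map π = some (π i) ↔ o = some i := by
  cases o <;> simp [π.injective.eq_iff]

section PinLabel

variable {L : Type} [DecidableEq L]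

def LcwState.mapLab (π : Equiv.Perm L) (s : LcwState L) : LcwState L :=
  ⟨s.n, s.adj, fun v => (s.lab v).map π⟩

def LcwOp.pinned (ℓ : L) (π : Equiv.Perm L) : LcwOp L → LcwOp L
  | .insert a => .insert (π a)
  | .join i j => .join (π i) (π j)
  | .relabel i j => if π i = ℓ ∧ π j ≠ ℓ then .relabel (π j) ℓ else .relabel (π i) (π j)

def LcwOp.pinPerm (ℓ : L) (π : Equiv.Perm L) : LcwOp L → Equiv.Perm L
  | .relabel i j => if π i = ℓ ∧ π j ≠ ℓ then Equiv.swap ℓ (π j) * π else π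
  | _ => π

def pinExpr (ℓ : L) : Equiv.Perm L → List (LcwOp L) → List (LcwOp L)
  | _, [] => []
  | π, op :: rest => op.pinned ℓ π :: pinExpr ℓ (op.pinPerm ℓ π) rest

theorem LcwState.step_mapLab_pinned (ℓ : L) (π : Equiv.Perm L) (s : LcwState L)
    (op : LcwOp L) :
    (s.mapLab π).step (op.pinned ℓ π) = (s.step op).mapLab (op.pinPerm ℓ π) := by
  cases op with
  | insert a =>
    simp only [LcwOp.pinned, LcwOp.pinPerm, LcwState.step, LcwState.mapLab, LcwState.mk.injEq,
      true_and]
    funext v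
    by_cases hv : v = s.n <;> simp [hv]
  | join i j =>
    simp only [LcwOp.pinned, LcwOp.pinPerm, LcwState.step, LcwState.mapLab,
      Option.map_perm_eq_some_perm]
  | relabel i j =>
    simp only [LcwOp.pinned, LcwOp.pinPerm]
    split_ifs with hc
    · simp only [LcwState.step, LcwState.mapLab, LcwState.mk.injEq, true_and]
      funext v
      obtain ⟨hi, hj⟩ := hc
      simp only [Option.map_perm_eq_some_perm]
      rcases s.lab v with _ | a
      · rfl
      · by_cases haj : a = j
        · simp [haj]
        by_cases hai : a = i
        · have hij : i ≠ j := fun h => hj (h ▸ hi)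
          simp [hai, hij, hi]
        · have ha : π a ≠ ℓ := hi ▸ π.injective.ne hai
          simp [haj, hai, Equiv.swap_apply_of_ne_of_ne ha (π.injective.ne haj)]
    · simp only [LcwState.step, LcwState.mapLab, LcwState.mk.injEq, true_and]
      funext v
      simp only [Option.map_perm_eq_some_perm]
      split_ifs <;> rfl

theorem foldl_step_pinExpr (ℓ : L) (e : List (LcwOp L)) (π : Equiv.Perm L) (s : LcwState L) :
    ∃ π', (pinExpr ℓ π e).foldl LcwState.step (s.mapLab π) =
      (e.foldl LcwState.step s).mapLab π' := by
  induction e generalizing π s with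
  | nil => exact ⟨π, rfl⟩
  | cons op rest ih =>
    rw [pinExpr, List.foldl_cons, List.foldl_cons, LcwState.step_mapLab_pinned]
    exact ih _ _

theorem runLcw_pinExpr (ℓ : L) (e : List (LcwOp L)) :
    ∃ π, runLcw (pinExpr ℓ 1 e) = (runLcw e).mapLab π :=
  foldl_step_pinExpr ℓ e 1 (LcwState.init L)

theorem exists_of_mem_pinExpr {ℓ : L} {π : Equiv.Perm L} {e : List (LcwOp L)} {op' : LcwOp L}
    (h : op' ∈ pinExpr ℓ π e) : ∃ σ : Equiv.Perm L, ∃ op ∈ e, op' = op.pinned ℓ σ := by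
  induction e generalizing π with
  | nil => simp [pinExpr] at h
  | cons op rest ih =>
    rcases List.mem_cons.1 h with rfl | h
    · exact ⟨π, op, List.mem_cons_self, rfl⟩
    · obtain ⟨σ, op₀, hop₀, rfl⟩ := ih h
      exact ⟨σ, op₀, List.mem_cons_of_mem _ hop₀, rfl⟩

theorem wfExpr_pinExpr (ℓ : L) (π : Equiv.Perm L) {e : List (LcwOp L)} (he : WfExpr e) :
    WfExpr (pinExpr ℓ π e) := by
  rintro _ hmem i' j' rfl
  obtain ⟨σ, op, hop, h⟩ := exists_of_mem_pinExpr hmem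
  cases op with
  | insert a => simp [LcwOp.pinned] at h
  | join i j =>
    obtain ⟨rfl, rfl⟩ : i' = σ i ∧ j' = σ j := by simpa [LcwOp.pinned] using h
    exact σ.injective.ne (he _ hop i j rfl)
  | relabel i j => simp only [LcwOp.pinned] at h; split_ifs at h

theorem pinExpr_relabel_eq (ℓ : L) (π : Equiv.Perm L) (e : List (LcwOp L)) :
    ∀ op ∈ pinExpr ℓ π e, ∀ j, op = LcwOp.relabel ℓ j → j = ℓ := by
  rintro _ hop j' rfl
  obtain ⟨σ, op, -, h⟩ := exists_of_mem_pinExpr hop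
  cases op with
  | insert a => simp [LcwOp.pinned] at h
  | join i j => simp [LcwOp.pinned] at h
  | relabel i j =>
    simp only [LcwOp.pinned] at h
    split_ifs at h with hc
    · exact (LcwOp.relabel.inj h).2
    · obtain ⟨hi, rfl⟩ := LcwOp.relabel.inj h
      exact not_not.1 fun hj => hc ⟨hi.symm, hj⟩

end PinLabel

theorem BuildsVia.of_runLcw_eq_mapLab {L V : Type} [DecidableEq L] [Fintype V]
    {e e' : List (LcwOp L)} {G : SimpleGraph V} {f : V → ℕ} {π : Equiv.Perm L}
    (he : BuildsVia e G f) (hwf : WfExpr e') (hrun : runLcw e' = (runLcw e).mapLab π) :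
    BuildsVia e' G f := by
  obtain ⟨-, hinj, hcard, hlt, hadj⟩ := he
  rw [BuildsVia, hrun]
  exact ⟨hwf, hinj, hcard, hlt, hadj⟩

theorem statement_4_general {V : Type} [Fintype V] (G : SimpleGraph V)
    (e : List (LcwOp (Fin (lcw G)))) (f : V → ℕ) (he : BuildsVia e G f)
    (ℓ : Fin (lcw G)) :
    ∃ e' : List (LcwOp (Fin (lcw G))), BuildsVia e' G f ∧
      ∀ op ∈ e', ∀ j, op = LcwOp.relabel ℓ j → j = ℓ := by
  obtain ⟨π, hrun⟩ := runLcw_pinExpr ℓ e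
  exact ⟨pinExpr ℓ 1 e, he.of_runLcw_eq_mapLab (wfExpr_pinExpr ℓ 1 he.1) hrun,
    pinExpr_relabel_eq ℓ 1 e⟩

/-- Proposition `prop-label-order`: given an efficient lcw
expression for `G` (over exactly `lcw G` labels, building `G` with insertion
order recorded by `f`) and a label `ℓ` used in it, there is an lcw expression
over the same labels building `G` with the same insertion order (the same `f`)
in which vertices labeled `ℓ` are never relabeled. -/
theorem statement_4 {V : Type} [Fintype V] (G : SimpleGraph V)
    (e : List (LcwOp (Fin (lcw G)))) (f : V → ℕ) (he : BuildsVia e G f)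
    (ℓ : Fin (lcw G))
    (hused : ∃ t v, (runLcw (e.take t)).lab v = some ℓ) :
    ∃ e' : List (LcwOp (Fin (lcw G))), BuildsVia e' G f ∧
      ∀ op ∈ e', ∀ j, op = LcwOp.relabel ℓ j → j = ℓ :=
  statement_4_general G e f he ℓ
end

section
/- Define a sequence of graphs by G₁ = K₂ and G_{k+1} = K1 ∗ ((G_k ∪ G_k) ∪ (G_k ∪ G_k)) for k ≥ 1, i.e., G_{k+1} is obtained by joining a single new vertex to the disjoint union of four copies of G_k. Then each G_k is a quasi-threshold graph and lcw(G_k) = k + 1 for all k ≥ 1. -/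
/-!
Upper bound: `qtG (k + 1)` is built by building four copies of `qtG k` one after the other,
each over the labels `1, …, k + 2` and then relabelled to `0`, and finally inserting the apex
with label `1` and joining it to label `0`.

Lower bound: two vertices that carry the same label at some moment receive the same edges
afterwards, and two such vertices that are not adjacent stay non-adjacent. So, right after some
vertex is inserted, a vertex that still misses an edge to `w` carries a label different from
that of every present vertex not adjacent to `w`, and the two ends of a missing edge carry
different labels. By induction on `k`, some moment has `k + 2` vertices of `qtG k` that are
pairwise forced apart in this way: take the copy of `qtG (k - 1)` whose moment is neither the
earliest nor the latest of the four, and add a vertex of another copy or the apex.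

Quasi-threshold: `P₄` and `C₄` are connected and have no dominating vertex, so an induced copy
of either would avoid the apex and lie inside one copy of `qtG (k - 1)`.
-/

section

variable {V W : Type} (G : SimpleGraph V) (H : SimpleGraph W)

@[simp] lemma graphDisjUnion_adj_inl_inl (a b : V) :
    (GraphDisjUnion G H).Adj (.inl a) (.inl b) ↔ G.Adj a b := Iff.rfl

@[simp] lemma graphDisjUnion_adj_inr_inr (a b : W) :
    (GraphDisjUnion G H).Adj (.inr a) (.inr b) ↔ H.Adj a b := Iff.rfl

@[simp] lemma graphDisjUnion_not_adj_inl_inr (a : V) (b : W) :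
    ¬ (GraphDisjUnion G H).Adj (.inl a) (.inr b) := id

@[simp] lemma graphDisjUnion_not_adj_inr_inl (a : W) (b : V) :
    ¬ (GraphDisjUnion G H).Adj (.inr a) (.inl b) := id

@[simp] lemma graphJoin_adj_inr_inr (a b : W) :
    (GraphJoin G H).Adj (.inr a) (.inr b) ↔ H.Adj a b := by
  simp only [GraphJoin, SimpleGraph.compl_adj, graphDisjUnion_adj_inr_inr]
  exact ⟨fun h => not_not.mp (h.2 ∘ And.intro (Sum.inr_injective.ne_iff.mp h.1)),
    fun h => ⟨Sum.inr_injective.ne h.ne, fun h' => h'.2 h⟩⟩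

@[simp] lemma graphJoin_adj_inl_inr (a : V) (b : W) : (GraphJoin G H).Adj (.inl a) (.inr b) :=
  ⟨Sum.inl_ne_inr, id⟩

@[simp] lemma graphJoin_adj_inr_inl (a : W) (b : V) : (GraphJoin G H).Adj (.inr a) (.inl b) :=
  ⟨Sum.inr_ne_inl, id⟩

end

def graphDisjUnionAssoc {U V W : Type} (F : SimpleGraph U) (G : SimpleGraph V)
    (H : SimpleGraph W) :
    GraphDisjUnion (GraphDisjUnion F G) H ≃g GraphDisjUnion F (GraphDisjUnion G H) where
  toEquiv := Equiv.sumAssoc U V W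
  map_rel_iff' := by rintro ((a | a) | a) ((b | b) | b) <;> simp

namespace qtG

def apex (k : ℕ) : qtV (k + 1) := .inl ()

def copy (k : ℕ) : Fin 4 → qtV k → qtV (k + 1)
  | 0, v => .inr (.inl (.inl v))
  | 1, v => .inr (.inl (.inr v))
  | 2, v => .inr (.inr (.inl v))
  | 3, v => .inr (.inr (.inr v))

def position (k : ℕ) : qtV (k + 1) → Option (Fin 4 × qtV k)
  | .inl _ => none
  | .inr (.inl (.inl v)) => some (0, v)
  | .inr (.inl (.inr v)) => some (1, v)
  | .inr (.inr (.inl v)) => some (2, v)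
  | .inr (.inr (.inr v)) => some (3, v)

lemma position_copy (k : ℕ) (c : Fin 4) (v : qtV k) : position k (copy k c v) = some (c, v) := by
  fin_cases c <;> rfl

lemma copy_ne_apex (k : ℕ) (c : Fin 4) (v : qtV k) : copy k c v ≠ apex k :=
  fun h => Option.some_ne_none (c, v) ((position_copy k c v).symm.trans (congrArg (position k) h))

lemma copy_inj {k : ℕ} {c c' : Fin 4} {a b : qtV k} :
    copy k c a = copy k c' b ↔ c = c' ∧ a = b := by
  refine ⟨fun h => ?_, fun ⟨hc, hab⟩ => hc ▸ hab ▸ rfl⟩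
  simpa [position_copy] using congrArg (position k) h

lemma cases_apex_or_copy {k : ℕ} (x : qtV (k + 1)) : x = apex k ∨ ∃ c a, x = copy k c a := by
  rcases x with _ | ((a | a) | (a | a))
  · exact .inl rfl
  exacts [.inr ⟨0, a, rfl⟩, .inr ⟨1, a, rfl⟩, .inr ⟨2, a, rfl⟩, .inr ⟨3, a, rfl⟩]

lemma adj_apex_iff {k : ℕ} {x : qtV (k + 1)} : (qtG (k + 1)).Adj (apex k) x ↔ x ≠ apex k := by
  refine ⟨fun h => h.ne.symm, fun hx => ?_⟩
  obtain ⟨c, a, rfl⟩ := (cases_apex_or_copy x).resolve_left hx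
  fin_cases c <;> simp [qtG, apex, copy]

lemma adj_copy_iff {k : ℕ} {c c' : Fin 4} {a b : qtV k} :
    (qtG (k + 1)).Adj (copy k c a) (copy k c' b) ↔ c = c' ∧ (qtG k).Adj a b := by
  fin_cases c <;> fin_cases c' <;> simp [qtG, copy]

def copyEmb (k : ℕ) (c : Fin 4) : qtG k ↪g qtG (k + 1) where
  toFun := copy k c
  inj' _ _ h := (copy_inj.mp h).2
  map_rel_iff' := adj_copy_iff.trans (and_iff_right rfl)

lemma exists_dominating : ∀ k : ℕ, ∃ d : qtV k, ∀ x, x ≠ d → (qtG k).Adj d x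
  | 0 => ⟨(0 : Fin 2), fun _ hx => (SimpleGraph.top_adj _ _).mpr (Ne.symm hx)⟩
  | k + 1 => ⟨apex k, fun _ => adj_apex_iff.mpr⟩

instance nonempty : ∀ k : ℕ, Nonempty (qtV k)
  | 0 => ⟨(0 : Fin 2)⟩
  | k + 1 => ⟨apex k⟩

lemma exists_adj : ∀ (k : ℕ) (x : qtV k), ∃ w, (qtG k).Adj x w
  | 0, x => by
    change Fin 2 at x
    refine ⟨x + 1, (SimpleGraph.top_adj _ _).mpr ?_⟩
    change @Ne (Fin 2) x (x + 1)
    fin_cases x <;> decide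
  | k + 1, x => by
    by_cases hx : x = apex k
    · obtain ⟨v⟩ := nonempty k
      exact ⟨copy k 0 v, hx ▸ adj_apex_iff.mpr (copy_ne_apex k 0 v)⟩
    · exact ⟨apex k, (adj_apex_iff.mpr hx).symm⟩

lemma exists_adj_of_cut {k : ℕ} (P : qtV k → Prop) {x y : qtV k} (hx : P x) (hy : ¬ P y) :
    ∃ u v, (qtG k).Adj u v ∧ P u ∧ ¬ P v := by
  obtain ⟨d, hd⟩ := exists_dominating k
  by_cases hPd : P d
  · exact ⟨d, y, hd y (by rintro rfl; exact hy hPd), hPd, hy⟩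
  · exact ⟨x, d, (hd x (by rintro rfl; exact hPd hx)).symm, hx, hPd⟩

end qtG

lemma not_inducedSubgraphOf_qtG {W : Type} [Nonempty W] (H : SimpleGraph W)
    (h_nondom : ∀ a, ∃ b, a ≠ b ∧ ¬ H.Adj a b)
    (h_conn : ∀ c : W → Fin 4, (∃ a b, c a ≠ c b) → ∃ a b, H.Adj a b ∧ c a ≠ c b) :
    ∀ k, ¬ InducedSubgraphOf H (qtG k)
  | 0, ⟨f, hf⟩ => by
    obtain ⟨b, hab, hn⟩ := h_nondom (Classical.arbitrary W)
    exact hn ((hf _ _).mpr ((SimpleGraph.top_adj _ _).mpr (f.injective.ne hab)))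
  | k + 1, ⟨f, hf⟩ => by
    have h_copy : ∀ a, ∃ c v, f a = qtG.copy k c v := by
      intro a
      refine (qtG.cases_apex_or_copy (f a)).resolve_left fun ha => ?_
      obtain ⟨b, hab, hn⟩ := h_nondom a
      exact hn ((hf a b).mpr (ha ▸ qtG.adj_apex_iff.mpr (ha ▸ f.injective.ne hab.symm)))
    choose c g hfg using h_copy
    have hc : ∀ a b, c a = c b := by
      by_contra! hne
      obtain ⟨a, b, hab, hcab⟩ := h_conn c hne
      have := (hf a b).mp hab
      rw [hfg, hfg, qtG.adj_copy_iff] at this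
      exact hcab this.1
    have hg : ∀ a b, H.Adj a b ↔ (qtG k).Adj (g a) (g b) := fun a b => by
      rw [hf, hfg, hfg, qtG.adj_copy_iff, hc a b, and_iff_right rfl]
    have hg_inj : Function.Injective g := fun a b h =>
      f.injective (by rw [hfg, hfg, hc a b, h])
    exact not_inducedSubgraphOf_qtG H h_nondom h_conn k ⟨⟨g, hg_inj⟩, hg⟩

instance : DecidableRel pathP4.Adj := fun _ _ => decidable_of_iff' _ (SimpleGraph.fromRel_adj _ _ _)

instance : DecidableRel cycleC4.Adj := fun _ _ => decidable_of_iff' _ (SimpleGraph.fromRel_adj _ _ _)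

set_option maxRecDepth 40000 in
theorem isQuasiThreshold_qtG (k : ℕ) : IsQuasiThreshold (qtG k) :=
  ⟨not_inducedSubgraphOf_qtG pathP4 (by decide) (by decide) k,
    not_inducedSubgraphOf_qtG cycleC4 (by decide) (by decide) k⟩

def LcwOp.map {L L' : Type} (φ : L → L') : LcwOp L → LcwOp L'
  | .insert a => .insert (φ a)
  | .join i j => .join (φ i) (φ j)
  | .relabel i j => .relabel (φ i) (φ j)

lemma wfExpr_append {L : Type} {l₁ l₂ : List (LcwOp L)} :
    WfExpr (l₁ ++ l₂) ↔ WfExpr l₁ ∧ WfExpr l₂ := by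
  simp only [WfExpr, List.mem_append, or_imp, forall_and]

lemma WfExpr.map {L L' : Type} {φ : L → L'} (hφ : Function.Injective φ) {e : List (LcwOp L)}
    (he : WfExpr e) : WfExpr (e.map (LcwOp.map φ)) := by
  simp only [WfExpr, List.mem_map]
  rintro _ ⟨op, hop, rfl⟩ i j h
  cases op with
  | join a b => cases h; exact hφ.ne (he _ hop a b rfl)
  | _ => cases h

namespace LcwState

variable {L : Type}

structure Valid (s : LcwState L) : Prop where
  lab_isSome : ∀ x < s.n, (s.lab x).isSome
  lab_eq_none : ∀ x, s.n ≤ x → s.lab x = none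
  adj_lt : ∀ x y, s.adj x y → x < s.n ∧ y < s.n

lemma valid_init : (init L).Valid :=
  ⟨fun _ h => absurd h (Nat.not_lt_zero _), fun _ _ => rfl, fun _ _ h => h.elim⟩

variable [DecidableEq L] (s : LcwState L)

@[simp] lemma step_insert_n (a : L) : (s.step (.insert a)).n = s.n + 1 := rfl
@[simp] lemma step_insert_adj (a : L) : (s.step (.insert a)).adj = s.adj := rfl
@[simp] lemma step_insert_lab (a : L) (x : ℕ) :
    (s.step (.insert a)).lab x = if x = s.n then some a else s.lab x := rfl
@[simp] lemma step_join_n (i j : L) : (s.step (.join i j)).n = s.n := rfl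
@[simp] lemma step_join_adj (i j : L) (x y : ℕ) :
    (s.step (.join i j)).adj x y ↔ s.adj x y ∨ (x ≠ y ∧
      ((s.lab x = some i ∧ s.lab y = some j) ∨ (s.lab x = some j ∧ s.lab y = some i))) :=
  Iff.rfl
@[simp] lemma step_join_lab (i j : L) : (s.step (.join i j)).lab = s.lab := rfl
@[simp] lemma step_relabel_n (i j : L) : (s.step (.relabel i j)).n = s.n := rfl
@[simp] lemma step_relabel_adj (i j : L) : (s.step (.relabel i j)).adj = s.adj := rfl
@[simp] lemma step_relabel_lab (i j : L) (x : ℕ) :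
    (s.step (.relabel i j)).lab x = if s.lab x = some i then some j else s.lab x := rfl

def run (l : List (LcwOp L)) : LcwState L := l.foldl step s

@[simp] lemma run_nil : s.run [] = s := rfl

@[simp] lemma run_cons (op : LcwOp L) (l : List (LcwOp L)) :
    s.run (op :: l) = (s.step op).run l := rfl

@[simp] lemma run_append (l₁ l₂ : List (LcwOp L)) : s.run (l₁ ++ l₂) = (s.run l₁).run l₂ :=
  List.foldl_append ..

lemma _root_.runLcw_eq_run (e : List (LcwOp L)) : runLcw e = (init L).run e := rfl

lemma _root_.runLcw_append (l₁ l₂ : List (LcwOp L)) : runLcw (l₁ ++ l₂) = (runLcw l₁).run l₂ :=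
  run_append ..

variable {s}

lemma Valid.step (hs : s.Valid) : ∀ op, (s.step op).Valid
  | .insert a => by
    refine ⟨fun x hx => ?_, fun x hx => ?_, fun x y h => ?_⟩ <;>
      simp only [step_insert_n, step_insert_lab, step_insert_adj] at *
    · split_ifs
      · rfl
      · exact hs.lab_isSome x (by omega)
    · rw [if_neg (by omega), hs.lab_eq_none x (by omega)]
    · have := hs.adj_lt x y h; omega
  | .join i j => by
    refine ⟨hs.lab_isSome, hs.lab_eq_none, fun x y h => ?_⟩
    have lt_of_eq_some {z : ℕ} {l : L} (hz : s.lab z = some l) : z < s.n := by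
      by_contra! hn; simp [hs.lab_eq_none z hn] at hz
    rcases (step_join_adj ..).mp h with h | ⟨-, ⟨hx, hy⟩ | ⟨hx, hy⟩⟩
    · exact hs.adj_lt x y h
    all_goals exact ⟨lt_of_eq_some hx, lt_of_eq_some hy⟩
  | .relabel i j => by
    refine ⟨fun x hx => ?_, fun x hx => ?_, hs.adj_lt⟩ <;>
      simp only [step_relabel_n, step_relabel_lab] at *
    · split_ifs
      · rfl
      · exact hs.lab_isSome x hx
    · simp [hs.lab_eq_none x hx]

lemma Valid.run (hs : s.Valid) (l : List (LcwOp L)) : (s.run l).Valid := by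
  induction l generalizing s with
  | nil => exact hs
  | cons op l ih => exact ih (hs.step op)

lemma _root_.valid_runLcw (e : List (LcwOp L)) : (runLcw e).Valid := valid_init.run e

lemma n_le_step (op : LcwOp L) : s.n ≤ (s.step op).n := by
  cases op <;> simp [step]


lemma lab_eq_step {x y : ℕ} (hx : x < s.n) (hy : y < s.n)
    (h : s.lab x = s.lab y) (op : LcwOp L) : (s.step op).lab x = (s.step op).lab y := by
  cases op with
  | insert a => simp only [step_insert_lab]; rw [if_neg (by omega), if_neg (by omega), h]
  | join i j => exact h
  | relabel i j => simp only [step_relabel_lab]; rw [h]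

lemma adj_run_of_lab_eq {x y w : ℕ} (l : List (LcwOp L)) (hx : x < s.n)
    (hy : y < s.n) (hxy : s.lab x = s.lab y) (hyw : y ≠ w) (h : s.adj x w → s.adj y w) :
    (s.run l).adj x w → (s.run l).adj y w := by
  induction l generalizing s with
  | nil => exact h
  | cons op l ih =>
    refine ih (hx.trans_le (n_le_step op)) (hy.trans_le (n_le_step op))
      (lab_eq_step hx hy hxy op) ?_
    cases op with
    | join i j =>
      rintro (hxw | ⟨-, hlab⟩)
      · exact .inl (h hxw)
      · exact .inr ⟨hyw, hxy ▸ hlab⟩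
    | _ => exact h

lemma not_adj_run_of_lab_eq {x y : ℕ} {l : List (LcwOp L)} (hl : WfExpr l)
    (hx : x < s.n) (hy : y < s.n) (hxy : s.lab x = s.lab y) (h : ¬ s.adj x y) :
    ¬ (s.run l).adj x y := by
  induction l generalizing s with
  | nil => exact h
  | cons op l ih =>
    refine ih (fun op' h' => hl op' (List.mem_cons_of_mem _ h'))
      (hx.trans_le (n_le_step op)) (hy.trans_le (n_le_step op)) (lab_eq_step hx hy hxy op) ?_
    cases op with
    | join i j =>
      have hij := hl _ List.mem_cons_self i j rfl
      rintro (hadj | ⟨-, ⟨hi, hj⟩ | ⟨hj, hi⟩⟩)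
      · exact h hadj
      all_goals simp_all
    | _ => exact h

lemma exists_split_at_insert (l : List (LcwOp L)) :
    ∀ (s : LcwState L) (i : ℕ), s.n ≤ i → i < (s.run l).n →
      ∃ l₁ a l₂, l = l₁ ++ .insert a :: l₂ ∧ (s.run l₁).n = i := by
  induction l with
  | nil => intro s i h₁ h₂; simp at h₂; omega
  | cons op l ih =>
    intro s i h₁ h₂
    by_cases hop : ∃ a, op = .insert a ∧ s.n = i
    · obtain ⟨a, rfl, hn⟩ := hop
      exact ⟨[], a, l, rfl, hn⟩
    · have h₁' : (s.step op).n ≤ i := by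
        cases op with
        | insert a => exact Nat.lt_of_le_of_ne h₁ fun h => hop ⟨a, rfl, h⟩
        | _ => exact h₁
      obtain ⟨l₁, a, l₂, rfl, hn⟩ := ih _ i h₁' h₂
      exact ⟨op :: l₁, a, l₂, rfl, hn⟩

end LcwState

section

variable {L L' : Type}

structure ShiftedCopy (s : LcwState L') (r : LcwState L) (φ : L → L') (t : LcwState L') :
    Prop where
  n_eq : t.n = s.n + r.n
  adj_iff : ∀ x y, t.adj x y ↔ s.adj x y ∨ ∃ a b, r.adj a b ∧ x = s.n + a ∧ y = s.n + b
  lab_lt : ∀ x < s.n, t.lab x = s.lab x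
  lab_add : ∀ a, t.lab (s.n + a) = (r.lab a).map φ

namespace ShiftedCopy

variable {s t : LcwState L'} {r : LcwState L} {φ : L → L'}

lemma init (hs : s.Valid) : ShiftedCopy s (LcwState.init L) φ s where
  n_eq := rfl
  adj_iff _ _ := by simp [LcwState.init]
  lab_lt _ _ := rfl
  lab_add a := hs.lab_eq_none _ (Nat.le_add_right _ _)

lemma adj_iff_of_lt (h : ShiftedCopy s r φ t) {x y : ℕ} (hxy : x < s.n ∨ y < s.n) :
    t.adj x y ↔ s.adj x y := by
  rw [h.adj_iff]
  exact or_iff_left (by rintro ⟨a, b, -, rfl, rfl⟩; omega)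

lemma adj_add_add (h : ShiftedCopy s r φ t) (hs : s.Valid) (a b : ℕ) :
    t.adj (s.n + a) (s.n + b) ↔ r.adj a b := by
  rw [h.adj_iff, or_iff_right fun h' => (hs.adj_lt _ _ h').1.not_ge (Nat.le_add_right _ _)]
  simp

variable (hφ : Function.Injective φ) (hsφ : ∀ x l, s.lab x = some l → l ∉ Set.range φ)
include hφ hsφ

lemma lab_eq_some_iff (h : ShiftedCopy s r φ t) (x : ℕ) (i : L) :
    t.lab x = some (φ i) ↔ ∃ a, x = s.n + a ∧ r.lab a = some i := by
  rcases lt_or_ge x s.n with hx | hx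
  · rw [h.lab_lt x hx]
    exact ⟨fun h' => absurd ⟨i, rfl⟩ (hsφ x _ h'), fun ⟨a, ha, _⟩ => by omega⟩
  · obtain ⟨a, rfl⟩ := Nat.exists_eq_add_of_le hx
    simp [h.lab_add, hφ.eq_iff]

variable [DecidableEq L] [DecidableEq L']

lemma step (h : ShiftedCopy s r φ t) : ∀ op, ShiftedCopy s (r.step op) φ (t.step (op.map φ))
  | .insert c => by
    refine ⟨by simp [LcwOp.map, h.n_eq]; omega, by simpa [LcwOp.map] using h.adj_iff,
      fun x hx => ?_, fun a => ?_⟩ <;> simp only [LcwOp.map, LcwState.step_insert_lab]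
    · rw [if_neg (by have := h.n_eq; omega), h.lab_lt x hx]
    · simp only [h.n_eq, Nat.add_left_cancel_iff, h.lab_add]
      split_ifs <;> rfl
  | .join i j => by
    refine ⟨h.n_eq, fun x y => ?_, h.lab_lt, h.lab_add⟩
    simp only [LcwOp.map, LcwState.step_join_adj, h.adj_iff, lab_eq_some_iff hφ hsφ h]
    constructor
    · rintro ((hs' | ⟨a, b, hab, rfl, rfl⟩) | ⟨hxy, ⟨⟨a, rfl, ha⟩, ⟨b, rfl, hb⟩⟩ |
        ⟨⟨a, rfl, ha⟩, ⟨b, rfl, hb⟩⟩⟩)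
      · exact .inl hs'
      · exact .inr ⟨a, b, .inl hab, rfl, rfl⟩
      · exact .inr ⟨a, b, .inr ⟨by omega, .inl ⟨ha, hb⟩⟩, rfl, rfl⟩
      · exact .inr ⟨a, b, .inr ⟨by omega, .inr ⟨ha, hb⟩⟩, rfl, rfl⟩
    · rintro (hs' | ⟨a, b, hab | ⟨hab, hl⟩, rfl, rfl⟩)
      · exact .inl (.inl hs')
      · exact .inl (.inr ⟨a, b, hab, rfl, rfl⟩)
      · refine .inr ⟨by omega, ?_⟩
        rcases hl with ⟨ha, hb⟩ | ⟨ha, hb⟩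
        exacts [.inl ⟨⟨a, rfl, ha⟩, ⟨b, rfl, hb⟩⟩, .inr ⟨⟨a, rfl, ha⟩, ⟨b, rfl, hb⟩⟩]
  | .relabel i j => by
    refine ⟨h.n_eq, h.adj_iff, fun x hx => ?_, fun a => ?_⟩ <;>
      simp only [LcwOp.map, LcwState.step_relabel_lab]
    · rw [h.lab_lt x hx, if_neg fun h' => hsφ x _ h' ⟨i, rfl⟩]
    · rw [h.lab_add]
      cases r.lab a <;> simp [hφ.eq_iff]; split_ifs <;> rfl

lemma run (h : ShiftedCopy s r φ t) (e : List (LcwOp L)) :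
    ShiftedCopy s (r.run e) φ (t.run (e.map (LcwOp.map φ))) := by
  induction e generalizing r t with
  | nil => exact h
  | cons op e ih => exact ih (h.step hφ hsφ op)

end ShiftedCopy

variable [DecidableEq L] [DecidableEq L']

lemma shiftedCopy_runLcw {s : LcwState L'} (hs : s.Valid) {φ : L → L'}
    (hφ : Function.Injective φ) (hsφ : ∀ x l, s.lab x = some l → l ∉ Set.range φ)
    (e : List (LcwOp L)) : ShiftedCopy s (runLcw e) φ (s.run (e.map (LcwOp.map φ))) :=
  (ShiftedCopy.init hs).run hφ hsφ e

end

section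

variable {L L' V W : Type} [Fintype V] [Fintype W]

structure Realizes (s : LcwState L) (G : SimpleGraph V) (f : V → ℕ) (p : L) : Prop where
  injective : Function.Injective f
  n_eq : s.n = Fintype.card V
  lt_n : ∀ v, f v < s.n
  adj_iff : ∀ u v, G.Adj u v ↔ s.adj (f u) (f v)
  lab_eq : ∀ x < s.n, s.lab x = some p

namespace Realizes

lemma comp_iso {s : LcwState L} {G : SimpleGraph V} {H : SimpleGraph W} {f : V → ℕ} {p : L}
    (h : Realizes s G f p) (σ : H ≃g G) : Realizes s H (f ∘ σ) p where
  injective := h.injective.comp σ.injective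
  n_eq := h.n_eq.trans (Fintype.card_congr σ.toEquiv).symm
  lt_n v := h.lt_n (σ v)
  adj_iff _ _ := σ.map_adj_iff.symm.trans (h.adj_iff _ _)
  lab_eq := h.lab_eq

lemma eq_of_lab_eq_some {s : LcwState L} {G : SimpleGraph V} {f : V → ℕ} {p q : L}
    (h : Realizes s G f p) (hs : s.Valid) {x : ℕ} (hx : s.lab x = some q) : q = p := by
  by_cases hxn : x < s.n
  · exact Option.some_injective _ (hx.symm.trans (h.lab_eq x hxn))
  · simp [hs.lab_eq_none x (not_lt.mp hxn)] at hx

variable [DecidableEq L] [DecidableEq L']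

lemma buildsVia {e : List (LcwOp L)} {G : SimpleGraph V} {f : V → ℕ} {p : L}
    (h : Realizes (runLcw e) G f p) (he : WfExpr e) : BuildsVia e G f :=
  ⟨he, h.injective, h.n_eq, h.lt_n, h.adj_iff⟩

lemma map {e : List (LcwOp L)} {G : SimpleGraph V} {f : V → ℕ} {p : L}
    (h : Realizes (runLcw e) G f p) {φ : L → L'} (hφ : Function.Injective φ) :
    Realizes (runLcw (e.map (LcwOp.map φ))) G f (φ p) := by
  have hc := shiftedCopy_runLcw LcwState.valid_init hφ (by simp [LcwState.init]) e
  rw [← runLcw_eq_run] at hc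
  have hn : (runLcw (e.map (LcwOp.map φ))).n = (runLcw e).n := hc.n_eq.trans (zero_add _)
  refine ⟨h.injective, hn.trans h.n_eq, hn ▸ h.lt_n, fun u v => ?_, fun x hx => ?_⟩
  · simp [hc.adj_iff, LcwState.init, h.adj_iff]
  · simpa [LcwState.init, h.lab_eq x (hn ▸ hx)] using hc.lab_add x

lemma graphDisjUnion {l : List (LcwOp L')} {e : List (LcwOp L)} {A : SimpleGraph V}
    {B : SimpleGraph W} {f : V → ℕ} {g : W → ℕ} {p : L'} {p' : L}
    (hA : Realizes (runLcw l) A f p) (hB : Realizes (runLcw e) B g p') {φ : L → L'}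
    (hφ : Function.Injective φ) (hp : p ∉ Set.range φ) :
    Realizes (runLcw (l ++ e.map (LcwOp.map φ) ++ [.relabel (φ p') p])) (GraphDisjUnion A B)
      (Sum.elim f fun v => (runLcw l).n + g v) p := by
  have hs := valid_runLcw l
  have hc := shiftedCopy_runLcw hs hφ
    (fun x q hx hq => hp (hA.eq_of_lab_eq_some hs hx ▸ hq)) e
  have hpp : p ≠ φ p' := fun h => hp ⟨p', h.symm⟩
  simp only [runLcw_append, LcwState.run_cons, LcwState.run_nil]
  refine ⟨hA.injective.sumElim ((add_right_injective _).comp hB.injective)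
    fun u v => ((hA.lt_n u).trans_le (Nat.le_add_right _ _)).ne, ?_, ?_, ?_, fun x hx => ?_⟩
  · simp [hc.n_eq, hA.n_eq, hB.n_eq]
  · rintro (u | v)
    · exact (hA.lt_n u).trans_le (hc.n_eq ▸ Nat.le_add_right _ _)
    · simpa [hc.n_eq] using hB.lt_n v
  · have hno (x y : ℕ) (h : (runLcw l).n ≤ x ∨ (runLcw l).n ≤ y) : ¬ (runLcw l).adj x y :=
      fun h' => by have := hs.adj_lt x y h'; omega
    rintro (u | u) (v | v) <;> simp only [Sum.elim_inl, Sum.elim_inr, LcwState.step_relabel_adj]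
    · rw [graphDisjUnion_adj_inl_inl, hc.adj_iff_of_lt (.inl (hA.lt_n u)), hA.adj_iff]
    · rw [hc.adj_iff_of_lt (.inl (hA.lt_n u))]
      exact iff_of_false id (hno _ _ (.inr (Nat.le_add_right _ _)))
    · rw [hc.adj_iff_of_lt (.inr (hA.lt_n v))]
      exact iff_of_false id (hno _ _ (.inl (Nat.le_add_right _ _)))
    · rw [graphDisjUnion_adj_inr_inr, hc.adj_add_add hs, hB.adj_iff]
  · rw [LcwState.step_relabel_n] at hx
    rw [LcwState.step_relabel_lab]
    rcases lt_or_ge x (runLcw l).n with hxs | hxs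
    · rw [hc.lab_lt x hxs, hA.lab_eq x hxs, if_neg (by simpa using hpp)]
    · obtain ⟨a, rfl⟩ := Nat.exists_eq_add_of_le hxs
      rw [hc.lab_add, hB.lab_eq a (by rw [hc.n_eq] at hx; omega)]
      simp

lemma graphJoin_bot {l : List (LcwOp L)} {G : SimpleGraph V} {f : V → ℕ} {p q : L}
    (h : Realizes (runLcw l) G f p) (hqp : q ≠ p) :
    Realizes (runLcw (l ++ [.insert q, .join q p, .relabel q p]))
      (GraphJoin (⊥ : SimpleGraph Unit) G) (Sum.elim (fun _ => (runLcw l).n) f) p := by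
  have hs := valid_runLcw l
  have hlab (v : V) : (runLcw l).lab (f v) = some p := h.lab_eq _ (h.lt_n v)
  have hne (v : V) : f v ≠ (runLcw l).n := (h.lt_n v).ne
  simp only [runLcw_append, LcwState.run_cons, LcwState.run_nil]
  refine ⟨Function.injective_of_subsingleton _ |>.sumElim h.injective fun _ v => (hne v).symm,
    ?_, ?_, ?_, fun x hx => ?_⟩
  · simp [h.n_eq, add_comm]
  · rintro (_ | v)
    · simp
    · simpa using (h.lt_n v).trans (Nat.lt_succ_self _)
  · have hne' (v : V) : (runLcw l).n ≠ f v := (hne v).symm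
    rintro (_ | u) (_ | v) <;> simp [hlab, hne, hne', hqp, Ne.symm hqp, h.adj_iff]
    · exact fun h' => (hs.adj_lt _ _ h').1.false
  · simp only [LcwState.step_relabel_lab, LcwState.step_join_lab, LcwState.step_insert_lab]
    simp only [LcwState.step_relabel_n, LcwState.step_join_n, LcwState.step_insert_n] at hx
    by_cases hxn : x = (runLcw l).n
    · simp [hxn]
    · simp [hxn, h.lab_eq x (by omega), Ne.symm hqp]

end Realizes

end

def qtExpr : ∀ k : ℕ, List (LcwOp (Fin (k + 2)))
  | 0 => [.insert 0, .insert 1, .join 0 1, .relabel 1 0]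
  | k + 1 =>
    (qtExpr k).map (.map Fin.castSucc) ++
      (qtExpr k).map (.map Fin.succ) ++ [.relabel 1 0] ++
      (qtExpr k).map (.map Fin.succ) ++ [.relabel 1 0] ++
      (qtExpr k).map (.map Fin.succ) ++ [.relabel 1 0] ++
      [.insert 1, .join 1 0, .relabel 1 0]

lemma realizes_qtExpr_zero : Realizes (runLcw (qtExpr 0)) (⊤ : SimpleGraph (Fin 2)) Fin.val 0 where
  injective := Fin.val_injective
  n_eq := rfl
  lt_n := Fin.isLt
  adj_iff u v := by
    fin_cases u <;> fin_cases v <;> simp [qtExpr, runLcw_eq_run, LcwState.init]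
  lab_eq x hx := by
    change x < 2 at hx
    interval_cases x <;> simp [qtExpr, runLcw_eq_run, LcwState.init]

lemma realizes_qtExpr : ∀ k : ℕ, ∃ f, Realizes (runLcw (qtExpr k)) (qtG k) f 0
  | 0 => ⟨_, realizes_qtExpr_zero⟩
  | k + 1 => by
    obtain ⟨f, hf⟩ := realizes_qtExpr k
    have hp : (0 : Fin (k + 3)) ∉ Set.range Fin.succ := fun ⟨i, hi⟩ => Fin.succ_ne_zero i hi
    have h := (((hf.map (Fin.castSucc_injective _)).graphDisjUnion hf (Fin.succ_injective _) hp).graphDisjUnion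
      hf (Fin.succ_injective _) hp).graphDisjUnion hf (Fin.succ_injective _) hp
    have h' := (h.comp_iso (graphDisjUnionAssoc _ _ _).symm).graphJoin_bot (q := 1) (by simp)
    simp only [Fin.castSucc_zero, Fin.succ_zero_eq_one] at h'
    exact ⟨_, h'⟩

lemma wfExpr_qtExpr : ∀ k : ℕ, WfExpr (qtExpr k)
  | 0 => by simp [WfExpr, qtExpr]
  | k + 1 => by
    have hc := (wfExpr_qtExpr k).map (Fin.castSucc_injective _)
    have hs := (wfExpr_qtExpr k).map (Fin.succ_injective _)
    simp only [qtExpr, wfExpr_append, hc, hs, true_and]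
    simp [WfExpr]

lemma builds_qtExpr (k : ℕ) : Builds (qtExpr k) (qtG k) :=
  (realizes_qtExpr k).imp fun _ h => h.buildsVia (wfExpr_qtExpr k)

section

variable {W W' : Type} (H : SimpleGraph W) (t : W → ℕ) (sep : ℕ → W → W → Prop)

/-- With `t` giving insertion indices: some edge `zw` is still missing right after the vertex
with index `i` has been inserted. -/
def HasPendingEdge (i : ℕ) (z : W) : Prop := ∃ w, H.Adj z w ∧ i ≤ max (t z) (t w)

/-- The two ways an lcw expression is forced to give `u` and `v` different labels at time `i`
(`sep i u v`): `u` has a pending edge that `v` must not receive, or `uv` is itself pending. -/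
structure SeparationRules : Prop where
  symm : ∀ {i u v}, sep i u v → sep i v u
  of_pending_nbr : ∀ {i u v w}, H.Adj u w → i ≤ max (t u) (t w) → ¬ H.Adj v w → v ≠ w →
    t u ≤ i → t v ≤ i → sep i u v
  of_pending_adj : ∀ {i u v}, H.Adj u v → i ≤ max (t u) (t v) → t u ≤ i → t v ≤ i → sep i u v

def SeparatedAt (i : ℕ) (Z : Finset W) : Prop :=
  (∀ z ∈ Z, t z ≤ i ∧ HasPendingEdge H t i z) ∧ (Z : Set W).Pairwise (sep i)

variable {H t sep} {H' : SimpleGraph W'}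

lemma HasPendingEdge.map {i : ℕ} {z : W'} (φ : H' ↪g H) (h : HasPendingEdge H' (t ∘ φ) i z) :
    HasPendingEdge H t i (φ z) :=
  let ⟨w, hw, hi⟩ := h
  ⟨φ w, φ.map_adj_iff.mpr hw, hi⟩

lemma SeparationRules.comap (h : SeparationRules H t sep) (φ : H' ↪g H) :
    SeparationRules H' (t ∘ φ) (fun i a b => sep i (φ a) (φ b)) where
  symm := h.symm
  of_pending_nbr huw hi hvw hne hu hv :=
    h.of_pending_nbr (φ.map_adj_iff.mpr huw) hi (φ.map_adj_iff.not.mpr hvw) (φ.injective.ne hne)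
      hu hv
  of_pending_adj huv hi hu hv := h.of_pending_adj (φ.map_adj_iff.mpr huv) hi hu hv

lemma SeparatedAt.exists_insert_map (hs : SeparationRules H t sep) {φ : H' ↪g H} {i : ℕ}
    {Z : Finset W'} (hZ : SeparatedAt H' (t ∘ φ) (fun i a b => sep i (φ a) (φ b)) i Z) {x : W}
    (hx : x ∉ Set.range φ) (hxi : t x ≤ i) (hxp : HasPendingEdge H t i x)
    (hxZ : ∀ z ∈ Z, sep i x (φ z)) :
    ∃ Z' : Finset W, Z'.card = Z.card + 1 ∧ SeparatedAt H t sep i Z' := by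
  have hxZ' : x ∉ Z.map φ.toEmbedding := fun h => hx (by
    obtain ⟨z, -, hz⟩ := Finset.mem_map.mp h; exact ⟨z, hz⟩)
  refine ⟨.cons x (Z.map φ.toEmbedding) hxZ', by rw [Finset.card_cons, Finset.card_map], ?_, ?_⟩
  · simp only [Finset.mem_cons, Finset.mem_map, RelEmbedding.coe_toEmbedding]
    rintro _ (rfl | ⟨z, hz, rfl⟩)
    · exact ⟨hxi, hxp⟩
    · exact ⟨(hZ.1 z hz).1, (hZ.1 z hz).2.map φ⟩
  · rw [Finset.coe_cons, Finset.coe_map, Set.pairwise_insert_of_notMem (by simpa using hxZ'),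
      RelEmbedding.coe_toEmbedding, φ.injective.injOn.pairwise_image]
    refine ⟨hZ.2, ?_⟩
    simp only [Set.mem_image, Finset.mem_coe]
    rintro _ ⟨z, hz, rfl⟩
    exact ⟨hxZ z hz, hs.symm (hxZ z hz)⟩

end

lemma exists_lt_lt_of_injective {ι α : Type} [Fintype ι] [LinearOrder α] {I : ι → α}
    (hI : Function.Injective I) (h : 2 < Fintype.card ι) : ∃ a j b, I a < I j ∧ I j < I b := by
  classical
  have hne : (Finset.univ : Finset ι).Nonempty := Finset.univ_nonempty_iff.mpr
    (Fintype.card_pos_iff.mp (by omega))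
  obtain ⟨a, -, ha⟩ := Finset.exists_min_image Finset.univ I hne
  obtain ⟨b, -, hb⟩ := Finset.exists_max_image Finset.univ I hne
  obtain ⟨j, hj⟩ : ((Finset.univ.erase a).erase b).Nonempty := by
    rw [← Finset.card_pos]
    have := Finset.pred_card_le_card_erase (s := Finset.univ.erase a) (a := b)
    have := Finset.pred_card_le_card_erase (s := Finset.univ) (a := a)
    rw [Finset.card_univ] at this
    omega
  obtain ⟨hjb, hja⟩ : j ≠ b ∧ j ≠ a := by simpa using hj
  exact ⟨a, j, b, (ha j (Finset.mem_univ _)).lt_of_ne (hI.ne hja.symm),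
    (hb j (Finset.mem_univ _)).lt_of_ne (hI.ne hjb)⟩

namespace qtG

variable {m : ℕ} {t : qtV (m + 1) → ℕ} {sep : ℕ → qtV (m + 1) → qtV (m + 1) → Prop}

lemma sep_copy_of_ne (hs : SeparationRules (qtG (m + 1)) t sep) {c j : Fin 4} (hcj : c ≠ j)
    {i : ℕ} {a z w : qtV m} (hzw : (qtG m).Adj z w)
    (hi : i ≤ max (t (copy m j z)) (t (copy m j w))) (hz : t (copy m j z) ≤ i)
    (ha : t (copy m c a) ≤ i) : sep i (copy m c a) (copy m j z) :=
  hs.symm <| hs.of_pending_nbr (adj_copy_iff.mpr ⟨rfl, hzw⟩) hi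
    (fun h => hcj (adj_copy_iff.mp h).1) (fun h => hcj (copy_inj.mp h).1) hz ha

lemma sep_apex (hs : SeparationRules (qtG (m + 1)) t sep) {c j : Fin 4} (hcj : c ≠ j) {i : ℕ}
    {b z : qtV m} (hb : i < t (copy m c b)) (hapex : t (apex m) ≤ i) (hz : t (copy m j z) ≤ i) :
    sep i (apex m) (copy m j z) :=
  hs.of_pending_nbr (adj_apex_iff.mpr (copy_ne_apex m c b)) (le_max_of_le_right hb.le)
    (fun h => hcj.symm (adj_copy_iff.mp h).1) (fun h => hcj.symm (copy_inj.mp h).1) hapex hz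

lemma exists_extension (hs : SeparationRules (qtG (m + 1)) t sep) {j : Fin 4} {i : ℕ}
    (hlo : ∃ c a, c ≠ j ∧ t (copy m c a) ≤ i) (hhi : ∃ c b, c ≠ j ∧ i < t (copy m c b)) :
    ∃ x, x ∉ Set.range (copy m j) ∧ t x ≤ i ∧ HasPendingEdge (qtG (m + 1)) t i x ∧
      ∀ z w, (qtG m).Adj z w → i ≤ max (t (copy m j z)) (t (copy m j w)) →
        t (copy m j z) ≤ i → sep i x (copy m j z) := by
  have not_range {c : Fin 4} (hcj : c ≠ j) (a : qtV m) : copy m c a ∉ Set.range (copy m j) :=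
    fun ⟨_, h⟩ => hcj (copy_inj.mp h).1.symm
  by_cases hA : ∃ c z v, c ≠ j ∧ (qtG m).Adj z v ∧ t (copy m c z) ≤ i ∧ i < t (copy m c v)
  · obtain ⟨c, z, v, hcj, hzv, hz, hv⟩ := hA
    exact ⟨copy m c z, not_range hcj z, hz,
      ⟨copy m c v, adj_copy_iff.mpr ⟨rfl, hzv⟩, le_max_of_le_right hv.le⟩,
      fun _ _ hzw hi hz' => sep_copy_of_ne hs hcj hzw hi hz' hz⟩
  push Not at hA
  by_cases hapex : i < t (apex m)
  · obtain ⟨c, a, hcj, ha⟩ := hlo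
    exact ⟨copy m c a, not_range hcj a, ha,
      ⟨apex m, (adj_apex_iff.mpr (copy_ne_apex m c a)).symm, le_max_of_le_right hapex.le⟩,
      fun _ _ hzw hi hz => sep_copy_of_ne hs hcj hzw hi hz ha⟩
  · obtain ⟨c, b, hcj, hb⟩ := hhi
    -- Copy `c` is connected, so by `hA` it cannot have vertices on both sides of time `i`.
    have hlate : ∀ v, i < t (copy m c v) := by
      by_contra! h
      obtain ⟨v, hv⟩ := h
      obtain ⟨z, w, hzw, hz, hw⟩ := exists_adj_of_cut (fun v => t (copy m c v) ≤ i) hv hb.not_ge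
      exact (hA c z w hcj hzw hz).not_gt (not_le.mp hw)
    exact ⟨apex m, fun ⟨a, h⟩ => copy_ne_apex m j a h, not_lt.mp hapex,
      ⟨copy m c b, adj_apex_iff.mpr (copy_ne_apex m c b), le_max_of_le_right hb.le⟩,
      fun z _ _ _ hz => sep_apex hs hcj (hlate b) (not_lt.mp hapex) hz⟩

theorem exists_separatedAt : ∀ (m : ℕ) {t : qtV m → ℕ} {sep : ℕ → qtV m → qtV m → Prop},
    Function.Injective t → SeparationRules (qtG m) t sep →
    ∃ y Z, Z.card = m + 2 ∧ SeparatedAt (qtG m) t sep (t y) Z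
  | 0, t, sep, ht, hs => by
    change Fin 2 → ℕ at t
    obtain ⟨y, -, hy⟩ := Finset.exists_max_image Finset.univ t Finset.univ_nonempty
    have hK2 (a b : Fin 2) (h : a ≠ b) : (qtG 0).Adj a b := (SimpleGraph.top_adj _ _).mpr h
    have hy_mem (a b : Fin 2) (h : a ≠ b) : t y ≤ max (t a) (t b) := by
      fin_cases a <;> fin_cases b <;> fin_cases y <;> simp_all
    refine ⟨y, Finset.univ, rfl, fun z _ => ⟨hy z (Finset.mem_univ _), ?_⟩,
      fun a _ b _ hab => hs.of_pending_adj (hK2 a b hab) (hy_mem a b hab)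
        (hy a (Finset.mem_univ _)) (hy b (Finset.mem_univ _))⟩
    by_cases hzy : z = y
    · obtain ⟨w, hw⟩ := exists_adj 0 z
      exact ⟨w, hw, hzy ▸ le_max_left _ _⟩
    · exact ⟨y, hK2 z y hzy, le_max_right _ _⟩
  | m + 1, t, sep, ht, hs => by
    choose y Z hcard hZ using fun c =>
      exists_separatedAt m (ht.comp (copyEmb m c).injective) (hs.comap (copyEmb m c))
    obtain ⟨a, j, b, haj, hjb⟩ := exists_lt_lt_of_injective (I := fun c => t (copy m c (y c)))
      (fun c c' h => (copy_inj.mp (ht h)).1) (by simp)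
    obtain ⟨x, hx, hxi, hxp, hxZ⟩ := exists_extension hs (j := j)
      ⟨a, y a, fun h => haj.ne (h ▸ rfl), haj.le⟩ ⟨b, y b, fun h => hjb.ne (h ▸ rfl), hjb⟩
    obtain ⟨Z', hZ'card, hZ'⟩ := (hZ j).exists_insert_map hs (φ := copyEmb m j) hx hxi hxp
      fun z hz => by
        obtain ⟨hzi, w, hzw, hi⟩ := (hZ j).1 z hz
        exact hxZ z w hzw hi hzi
    exact ⟨copy m j (y j), Z', by rw [hZ'card, hcard], hZ'⟩

end qtG

section

variable {L V : Type} [DecidableEq L]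

/-- `x` and `y` carry different labels right after the vertex with index `i` is inserted. -/
def LabelsDifferAt (e : List (LcwOp L)) (i x y : ℕ) : Prop :=
  ∀ l₁ a l₂, e = l₁ ++ .insert a :: l₂ → (runLcw l₁).n = i →
    ((runLcw l₁).step (.insert a)).lab x ≠ ((runLcw l₁).step (.insert a)).lab y

lemma BuildsVia.separationRules [Fintype V] {e : List (LcwOp L)} {G : SimpleGraph V} {f : V → ℕ}
    (hb : BuildsVia e G f) :
    SeparationRules G f fun i u v => LabelsDifferAt e i (f u) (f v) := by
  obtain ⟨hwf, hinj, -, -, hadj⟩ := hb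
  have hrun {l₁ a l₂} (he : e = l₁ ++ .insert a :: l₂) :
      runLcw e = ((runLcw l₁).step (.insert a)).run l₂ := by
    rw [he, runLcw_append]; rfl
  have hnew {l₁ : List (LcwOp L)} {a : L} {x y : ℕ} (hi : (runLcw l₁).n ≤ max x y) :
      ¬ ((runLcw l₁).step (.insert a)).adj x y := fun h => by
    have := (valid_runLcw l₁).adj_lt x y h
    rw [le_max_iff] at hi; omega
  refine ⟨fun h l₁ a l₂ he hn => (h l₁ a l₂ he hn).symm, ?_, ?_⟩
  · intro i u v w huw hi hvw hne hu hv l₁ a l₂ he hn hlab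
    refine hvw ((hadj v w).mpr (hrun he ▸ LcwState.adj_run_of_lab_eq l₂ ?_ ?_ hlab
      (hinj.ne hne) (absurd · (hnew (hn ▸ hi))) (hrun he ▸ (hadj u w).mp huw)))
    all_goals simp only [LcwState.step_insert_n]; omega
  · intro i u v huv hi hu hv l₁ a l₂ he hn hlab
    have hwf₂ : WfExpr l₂ := fun op hop => hwf op (by simp [he, hop])
    refine LcwState.not_adj_run_of_lab_eq hwf₂ ?_ ?_ hlab (hnew (hn ▸ hi))
      (hrun he ▸ (hadj u v).mp huv)
    all_goals simp only [LcwState.step_insert_n]; omega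

lemma card_le_of_labelsDifferAt [Fintype L] {e : List (LcwOp L)} {f : V → ℕ} {i : ℕ}
    (hi : i < (runLcw e).n) {Z : Finset V} (hZ : ∀ z ∈ Z, f z ≤ i)
    (hsep : (Z : Set V).Pairwise fun u v => LabelsDifferAt e i (f u) (f v)) :
    Z.card ≤ Fintype.card L := by
  obtain ⟨l₁, a, l₂, he, hn⟩ :=
    LcwState.exists_split_at_insert e (LcwState.init L) i (Nat.zero_le _) hi
  have hsome (z : V) (hz : z ∈ Z) : ((runLcw l₁).step (.insert a)).lab (f z) ≠ none :=
    Option.isSome_iff_ne_none.mp (((valid_runLcw l₁).step _).lab_isSome _ (by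
      simp only [LcwState.step_insert_n]; have := hZ z hz; rw [runLcw_eq_run, hn]; omega))
  calc Z.card ≤ ((Finset.univ : Finset (Option L)).erase none).card :=
        Finset.card_le_card_of_injOn (fun z => ((runLcw l₁).step (.insert a)).lab (f z))
          (fun z hz => by simpa using hsome z hz)
          fun z₁ hz₁ z₂ hz₂ h => by_contra fun hne => hsep hz₁ hz₂ hne l₁ a l₂ he hn h
    _ = Fintype.card L := by simp [Finset.card_erase_of_mem]

lemma le_of_builds_qtG {k q : ℕ} {e : List (LcwOp (Fin q))} (h : Builds e (qtG k)) :
    k + 2 ≤ q := by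
  obtain ⟨f, hb⟩ := h
  obtain ⟨y, Z, hcard, hZ⟩ := qtG.exists_separatedAt k hb.2.1 hb.separationRules
  simpa [hcard] using card_le_of_labelsDifferAt (hb.2.2.2.1 y) (fun z hz => (hZ.1 z hz).1) hZ.2

end

lemma lcw_eq_of_builds {V : Type} [Fintype V] {G : SimpleGraph V} {n : ℕ}
    {e : List (LcwOp (Fin n))} (he : Builds e G)
    (hlow : ∀ q (e' : List (LcwOp (Fin q))), Builds e' G → n ≤ q) : lcw G = n :=
  le_antisymm (Nat.sInf_le ⟨e, he⟩) (le_csInf ⟨n, e, he⟩ fun q ⟨e', he'⟩ => hlow q e' he')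

/-- the graphs `G₁ = K₂`,
`G_{k+1} = K₁ ∗ ((G_k ∪ G_k) ∪ (G_k ∪ G_k))` are quasi-threshold graphs with
`lcw (G_k) = k + 1` for all `k ≥ 1`.  Here `qtG k = G_{k+1}` (0-indexed), so
the claim reads `lcw (qtG k) = (k + 1) + 1`. -/
theorem statement_8 (k : ℕ) :
    IsQuasiThreshold (qtG k) ∧ lcw (qtG k) = (k + 1) + 1 :=
  ⟨isQuasiThreshold_qtG k, lcw_eq_of_builds (builds_qtExpr k) fun _ _ => le_of_builds_qtG⟩
end
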